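/- arXiv:math/0511679 — 2 statements merged into one kernel-verified Lean document; each statement's English description precedes it below -/
import Mathlib

section
/- Let Q and Q' be two distinct quadric cones in PG(3,q) having exactly one common line. Then |Q ∩ Q'| ≤ 2q + 1. -/
/-- A form is a cone form if, after a linear change of coordinates, it is
`x0*x1 + x2^2` (a rank-3 quadratic form). -/
def IsConeForm {Fq : Type} [Field Fq] (f : (Fin 4 → Fq) → Fq) : Prop :=
  ∃ φ : (Fin 4 → Fq) ≃ₗ[Fq] (Fin 4 → Fq), ∀ v, f v = φ v 0 * φ v 1 + (φ v 2) ^ 2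

open Classical in
private noncomputable def nu {Fq : Type} [Field Fq] (φ : (Fin 4 → Fq) ≃ₗ[Fq] (Fin 4 → Fq))
    (x : Fin 4 → Fq) : Option Fq :=
  if φ x 0 = 0 then none else some (φ x 2 / φ x 0)

section Aux

variable {Fq : Type} [Field Fq]

private instance [Finite Fq] : Finite (Projectivization Fq (Fin 4 → Fq)) := by
  unfold Projectivization
  exact Quotient.finite _

private lemma cf_smul {f : (Fin 4 → Fq) → Fq} {φ : (Fin 4 → Fq) ≃ₗ[Fq] (Fin 4 → Fq)}
    (hφ : ∀ v, f v = φ v 0 * φ v 1 + (φ v 2)^2) (s : Fq) (x : Fin 4 → Fq) :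
    f (s • x) = s^2 * f x := by
  simp only [hφ, map_smul, Pi.smul_apply, smul_eq_mul]; ring

private lemma cf_combo {f : (Fin 4 → Fq) → Fq} {φ : (Fin 4 → Fq) ≃ₗ[Fq] (Fin 4 → Fq)}
    (hφ : ∀ v, f v = φ v 0 * φ v 1 + (φ v 2)^2) (s t : Fq) (x y : Fin 4 → Fq) :
    f (s • x + t • y) = s^2 * f x + s * t * (φ x 0 * φ y 1 + φ x 1 * φ y 0 + 2 * φ x 2 * φ y 2)
      + t^2 * f y := by
  simp only [hφ, map_add, map_smul, Pi.add_apply, Pi.smul_apply, smul_eq_mul]; ring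

private lemma vertex_coords {φ : (Fin 4 → Fq) ≃ₗ[Fq] (Fin 4 → Fq)} :
    φ (φ.symm (Pi.single 3 1)) 0 = 0 ∧ φ (φ.symm (Pi.single 3 1)) 1 = 0 ∧
    φ (φ.symm (Pi.single 3 1)) 2 = 0 ∧ φ (φ.symm (Pi.single 3 1)) 3 = 1 := by
  rw [LinearEquiv.apply_symm_apply]
  refine ⟨?_, ?_, ?_, ?_⟩ <;> simp [Pi.single_apply]

private lemma ker_char {φ : (Fin 4 → Fq) ≃ₗ[Fq] (Fin 4 → Fq)} (x : Fin 4 → Fq)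
    (h0 : φ x 0 = 0) (h1 : φ x 1 = 0) (h2 : φ x 2 = 0) :
    x = (φ x 3) • φ.symm (Pi.single 3 1) := by
  apply φ.injective
  rw [map_smul, LinearEquiv.apply_symm_apply]
  funext i
  fin_cases i <;> simp [h0, h1, h2, Pi.single_apply]

private lemma mk_eq_proj {x x' : Fin 4 → Fq} (hx : x ≠ 0) (hx' : x' ≠ 0) {s s' : Fq}
    (hs : s ≠ 0) (hs' : s' ≠ 0) (h : s • x = s' • x') :
    Projectivization.mk Fq x hx = Projectivization.mk Fq x' hx' := by
  rw [Projectivization.mk_eq_mk_iff]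
  refine ⟨Units.mk0 (s⁻¹ * s') (by simp [hs, hs']), ?_⟩
  show (s⁻¹ * s') • x' = x
  rw [mul_smul, ← h, inv_smul_smul₀ hs]

private lemma mem_span_vertex {φ : (Fin 4 → Fq) ≃ₗ[Fq] (Fin 4 → Fq)} (x : Fin 4 → Fq) :
    x ∈ Submodule.span Fq {φ.symm (Pi.single 3 1)} ↔
      (φ x 0 = 0 ∧ φ x 1 = 0 ∧ φ x 2 = 0) := by
  constructor
  · rintro h
    rw [Submodule.mem_span_singleton] at h
    obtain ⟨c, rfl⟩ := h
    rw [map_smul, LinearEquiv.apply_symm_apply]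
    refine ⟨?_, ?_, ?_⟩ <;> simp [Pi.single_apply]
  · rintro ⟨h0, h1, h2⟩
    rw [Submodule.mem_span_singleton]
    exact ⟨φ x 3, (ker_char (φ := φ) x h0 h1 h2).symm⟩

private lemma pair_span_finrank {x y : Fin 4 → Fq} (h : LinearIndependent Fq ![x, y]) :
    Module.finrank Fq (Submodule.span Fq {x, y}) = 2 := by
  have h2 := finrank_span_eq_card h
  have : Set.range ![x, y] = {x, y} := by
    ext z; simp [Matrix.range_cons, Matrix.range_empty, or_comm]
  rw [this] at h2
  simpa using h2

private lemma pair_indep {x y : Fin 4 → Fq} (hy : y ≠ 0)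
    (hx : x ∉ Submodule.span Fq {y}) : LinearIndependent Fq ![x, y] := by
  rw [LinearIndependent.pair_iff]
  intro s t hst
  have hs : s = 0 := by
    by_contra hs
    apply hx
    rw [Submodule.mem_span_singleton]
    refine ⟨-t / s, ?_⟩
    apply smul_right_injective _ hs
    show s • ((-t / s) • y) = s • x
    rw [smul_smul]
    have hc : s * (-t / s) = -t := by field_simp
    rw [hc]
    linear_combination (norm := module) -hst
  refine ⟨hs, ?_⟩
  rw [hs, zero_smul, zero_add] at hst
  exact (smul_eq_zero.mp hst).resolve_right hy

private lemma vertex_mem {f : (Fin 4 → Fq) → Fq} {φ : (Fin 4 → Fq) ≃ₗ[Fq] (Fin 4 → Fq)}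
    (hφ : ∀ v, f v = φ v 0 * φ v 1 + (φ v 2)^2) (W : Submodule Fq (Fin 4 → Fq))
    (hrank : Module.finrank Fq W = 2) (hW : ∀ w ∈ W, f w = 0) :
    φ.symm (Pi.single 3 1) ∈ W := by
  classical
  have conclude : ∀ v' : Fin 4 → Fq, v' ∈ W → v' ≠ 0 → φ v' 0 = 0 → φ v' 1 = 0 →
      φ v' 2 = 0 → φ.symm (Pi.single 3 1) ∈ W := by
    intro v' hvW hvne h0 h1 h2
    have hk := ker_char (φ := φ) v' h0 h1 h2
    set c := φ v' 3 with hc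
    have h3 : c ≠ 0 := by
      intro h
      exact hvne (by rw [hk, h, zero_smul])
    have hmem := W.smul_mem c⁻¹ hvW
    rw [hk, smul_smul, inv_mul_cancel₀ h3, one_smul] at hmem
    exact hmem
  have : FiniteDimensional Fq W := inferInstance
  let b : Module.Basis (Fin 2) Fq W := Module.finBasisOfFinrankEq Fq W hrank
  set u : Fin 4 → Fq := (b 0 : Fin 4 → Fq) with hu
  set v : Fin 4 → Fq := (b 1 : Fin 4 → Fq) with hv
  have hli : LinearIndependent Fq (fun i => ((b i : W) : Fin 4 → Fq)) :=
    b.linearIndependent.map' W.subtype (Submodule.ker_subtype W)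
  have hind : ∀ a c : Fq, a • u + c • v = 0 → a = 0 ∧ c = 0 := by
    intro a c h
    have h2 := Fintype.linearIndependent_iff.mp hli ![a, c] ?_
    · exact ⟨h2 0, h2 1⟩
    · rw [Fin.sum_univ_two]
      simp only [Matrix.cons_val_zero, Matrix.cons_val_one, Matrix.head_cons]
      exact h
  have huW : u ∈ W := (b 0).2
  have hvW : v ∈ W := (b 1).2
  have hune : u ≠ 0 := by
    intro h
    exact one_ne_zero ((hind 1 0 (by rw [h, smul_zero, zero_smul, add_zero])).1)
  obtain ⟨w, hwW, hwne, hw0⟩ : ∃ w, w ∈ W ∧ w ≠ 0 ∧ φ w 0 = 0 := by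
    by_cases hcase : (φ v 0) • u - (φ u 0) • v = 0
    · have := hind (φ v 0) (-(φ u 0)) (by rw [neg_smul, ← sub_eq_add_neg]; exact hcase)
      exact ⟨u, huW, hune, by rw [← neg_eq_zero] at this; simpa using this.2⟩
    · refine ⟨(φ v 0) • u - (φ u 0) • v, ?_, hcase, ?_⟩
      · exact W.sub_mem (W.smul_mem _ huW) (W.smul_mem _ hvW)
      · rw [map_sub, map_smul, map_smul]
        simp only [Pi.sub_apply, Pi.smul_apply, smul_eq_mul]
        ring
  have hfw := hW w hwW
  rw [hφ, hw0, zero_mul, zero_add, sq_eq_zero_iff] at hfw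
  by_cases hw1 : φ w 1 = 0
  · exact conclude w hwW hwne hw0 hw1 hfw
  · obtain ⟨u', hu'W, hu'span⟩ : ∃ u', u' ∈ W ∧ u' ∉ Submodule.span Fq {w} := by
      by_contra hc
      push_neg at hc
      have hle : W ≤ Submodule.span Fq {w} := fun z hz => hc z hz
      have := Submodule.finrank_mono (R := Fq) hle
      rw [hrank, finrank_span_singleton hwne] at this
      omega
    have hfu' := hW u' hu'W
    have hfuw := hW (u' + w) (W.add_mem hu'W hwW)
    rw [hφ] at hfu' hfuw
    simp only [map_add, Pi.add_apply] at hfuw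
    rw [hw0, hfw] at hfuw
    have hu'0 : φ u' 0 = 0 := by
      have : φ u' 0 * φ w 1 = 0 := by linear_combination hfuw - hfu'
      exact (mul_eq_zero.mp this).resolve_right hw1
    have hu'2 : φ u' 2 = 0 := by
      rw [hu'0, zero_mul, zero_add, sq_eq_zero_iff] at hfu'
      exact hfu'
    set v' : Fin 4 → Fq := (φ w 1) • u' - (φ u' 1) • w with hv'
    have hv'W : v' ∈ W := W.sub_mem (W.smul_mem _ hu'W) (W.smul_mem _ hwW)
    have hv'ne : v' ≠ 0 := by
      intro h
      apply hu'span
      rw [Submodule.mem_span_singleton]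
      refine ⟨(φ w 1)⁻¹ * φ u' 1, ?_⟩
      have : (φ w 1) • u' = (φ u' 1) • w := by
        rw [hv', sub_eq_zero] at h; exact h
      rw [mul_smul, ← this, inv_smul_smul₀ hw1]
    refine conclude v' hv'W hv'ne ?_ ?_ ?_ <;>
        rw [hv', map_sub, map_smul, map_smul] <;>
        simp only [Pi.sub_apply, Pi.smul_apply, smul_eq_mul]
    · linear_combination (φ w 1) * hu'0 - (φ u' 1) * hw0
    · ring
    · linear_combination (φ w 1) * hu'2 - (φ u' 1) * hfw

private lemma decomp {φ : (Fin 4 → Fq) ≃ₗ[Fq] (Fin 4 → Fq)} (x x' : Fin 4 → Fq) (s : Fq)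
    (h0 : φ x' 0 = s * φ x 0) (h1 : φ x' 1 = s * φ x 1) (h2 : φ x' 2 = s * φ x 2) :
    ∃ t : Fq, x' = s • x + t • φ.symm (Pi.single 3 1) := by
  set y := x' - s • x with hy
  have hc : ∀ i, φ y i = φ x' i - s * φ x i := by
    intro i
    rw [hy, map_sub, map_smul]
    simp
  have hk := ker_char (φ := φ) y (by rw [hc, h0]; ring) (by rw [hc, h1]; ring)
    (by rw [hc, h2]; ring)
  exact ⟨φ y 3, by rw [← hk, hy]; abel⟩

private lemma prop_of_nu_eq {f : (Fin 4 → Fq) → Fq} {φ : (Fin 4 → Fq) ≃ₗ[Fq] (Fin 4 → Fq)}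
    (hφ : ∀ v, f v = φ v 0 * φ v 1 + (φ v 2)^2) (x x' : Fin 4 → Fq)
    (hfx : f x = 0) (hfx' : f x' = 0)
    (hxs : ¬(φ x 0 = 0 ∧ φ x 1 = 0 ∧ φ x 2 = 0))
    (hx's : ¬(φ x' 0 = 0 ∧ φ x' 1 = 0 ∧ φ x' 2 = 0))
    (hnu : nu φ x = nu φ x') :
    ∃ s t : Fq, s ≠ 0 ∧ x' = s • x + t • φ.symm (Pi.single 3 1) := by
  classical
  rw [hφ] at hfx hfx'
  by_cases h0 : φ x 0 = 0
  · have h0' : φ x' 0 = 0 := by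
      by_contra hc
      rw [nu, if_pos h0, nu, if_neg hc] at hnu
      cases hnu
    have h2 : φ x 2 = 0 := by
      rw [h0, zero_mul, zero_add, sq_eq_zero_iff] at hfx; exact hfx
    have h2' : φ x' 2 = 0 := by
      rw [h0', zero_mul, zero_add, sq_eq_zero_iff] at hfx'; exact hfx'
    have h1 : φ x 1 ≠ 0 := fun hc => hxs ⟨h0, hc, h2⟩
    have h1' : φ x' 1 ≠ 0 := fun hc => hx's ⟨h0', hc, h2'⟩
    set s := φ x' 1 / φ x 1 with hs
    have hsne : s ≠ 0 := div_ne_zero h1' h1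
    obtain ⟨t, ht⟩ := decomp (φ := φ) x x' s (by rw [h0, h0']; ring)
      (by rw [hs]; field_simp) (by rw [h2, h2']; ring)
    exact ⟨s, t, hsne, ht⟩
  · have h0' : φ x' 0 ≠ 0 := by
      intro hc
      rw [nu, if_neg h0, nu, if_pos hc] at hnu
      cases hnu
    rw [nu, if_neg h0, nu, if_neg h0', Option.some_inj] at hnu
    set s := φ x' 0 / φ x 0 with hs
    have hsne : s ≠ 0 := div_ne_zero h0' h0
    have hc0 : φ x' 0 = s * φ x 0 := by rw [hs]; field_simp
    have hc2 : φ x' 2 = s * φ x 2 := by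
      rw [hs]
      field_simp
      have := hnu
      field_simp at this
      linear_combination -this
    have hc1 : φ x' 1 = s * φ x 1 := by
      have hx1 : φ x 1 = -(φ x 2)^2 / φ x 0 := by field_simp; linear_combination hfx
      have hx'1 : φ x' 1 = -(φ x' 2)^2 / φ x' 0 := by field_simp; linear_combination hfx'
      rw [hx'1, hc2, hc0, hx1, hs]
      field_simp
    obtain ⟨t, ht⟩ := decomp (φ := φ) x x' s hc0 hc1 hc2
    exact ⟨s, t, hsne, ht⟩

end Aux

/-- Two distinct quadric cones in PG(3,q) with exactly one common line meet in at most
`2q + 1` points. -/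
theorem cones_one_common_line (q : ℕ) (Fq : Type) [Field Fq] [Fintype Fq]
    (hq : Fintype.card Fq = q)
    (f f' : (Fin 4 → Fq) → Fq) (hf : IsConeForm f) (hf' : IsConeForm f')
    (Q Q' : Set (Projectivization Fq (Fin 4 → Fq)))
    (hQ : Q = {P | f P.rep = 0}) (hQ' : Q' = {P | f' P.rep = 0})
    (hne : Q ≠ Q')
    (honeline : ∃! W : Submodule Fq (Fin 4 → Fq), Module.finrank Fq W = 2 ∧
      {P : Projectivization Fq (Fin 4 → Fq) | P.rep ∈ W} ⊆ Q ∩ Q') :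
    (Q ∩ Q').ncard ≤ 2 * q + 1 := by
  classical
  obtain ⟨φ, hφ⟩ := hf
  obtain ⟨ψ, hψ⟩ := hf'
  obtain ⟨W, ⟨hWrank, hWsub⟩, hWuniq⟩ := honeline
  set v₀ : Fin 4 → Fq := φ.symm (Pi.single 3 1) with hv₀def
  have hv₀ne : v₀ ≠ 0 := by
    rw [hv₀def]
    intro h
    have h2 : (Pi.single 3 1 : Fin 4 → Fq) = 0 := by
      have := congrArg φ h
      rwa [LinearEquiv.apply_symm_apply, map_zero] at this
    have := congrFun h2 3
    simp [Pi.single_apply] at this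
  have hQf : ∀ P : Projectivization Fq (Fin 4 → Fq), P ∈ Q → f P.rep = 0 := by
    intro P hP; rw [hQ] at hP; exact hP
  have hQ'f : ∀ P : Projectivization Fq (Fin 4 → Fq), P ∈ Q' → f' P.rep = 0 := by
    intro P hP; rw [hQ'] at hP; exact hP
  -- both forms vanish identically on W
  have hzero : ∀ (g : (Fin 4 → Fq) → Fq) (χ : (Fin 4 → Fq) ≃ₗ[Fq] (Fin 4 → Fq)),
      (∀ v, g v = χ v 0 * χ v 1 + (χ v 2)^2) →
      (∀ P : Projectivization Fq (Fin 4 → Fq), P.rep ∈ W → g P.rep = 0) →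
      ∀ w ∈ W, g w = 0 := by
    intro g χ hχ hg w hw
    by_cases hwz : w = 0
    · rw [hwz, hχ, map_zero]; simp
    · set P := Projectivization.mk Fq w hwz with hP
      have hmk : Projectivization.mk Fq P.rep P.rep_nonzero = P := Projectivization.mk_rep P
      rw [hP, Projectivization.mk_eq_mk_iff] at hmk
      obtain ⟨a, ha⟩ := hmk
      have hrepW : P.rep ∈ W := by
        rw [← ha, Units.smul_def]
        exact W.smul_mem _ hw
      have hz := hg P hrepW
      rw [← ha, Units.smul_def, cf_smul hχ] at hz
      have hane : (a : Fq) ≠ 0 := a.ne_zero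
      have := mul_eq_zero.mp hz
      rcases this with h | h
      · exact absurd h (pow_ne_zero 2 hane)
      · exact h
  have hWf : ∀ w ∈ W, f w = 0 :=
    hzero f φ hφ (fun P hP => hQf P (hWsub hP).1)
  have hWf' : ∀ w ∈ W, f' w = 0 :=
    hzero f' ψ hψ (fun P hP => hQ'f P (hWsub hP).2)
  have hv₀W : v₀ ∈ W := vertex_mem hφ W hWrank hWf
  have hf'v₀ : f' v₀ = 0 := hWf' v₀ hv₀W
  have hfv₀ : f v₀ = 0 := hWf v₀ hv₀W
  have hvc := vertex_coords (φ := φ)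
  have hspanle : Submodule.span Fq {v₀} ≤ W := by
    rw [Submodule.span_singleton_le_iff_mem]; exact hv₀W
  -- Lemma B: dichotomy
  have hB : ∀ x : Fin 4 → Fq, f x = 0 → f' x = 0 → x ∉ W →
      ∀ s t : Fq, f' (s • x + t • v₀) = 0 → s = 0 ∨ t = 0 := by
    intro x hfx hf'x hxW s t hst
    set b := ψ x 0 * ψ v₀ 1 + ψ x 1 * ψ v₀ 0 + 2 * ψ x 2 * ψ v₀ 2 with hb
    have hexp : ∀ s' t' : Fq, f' (s' • x + t' • v₀) = s' * t' * b := by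
      intro s' t'
      rw [cf_combo hψ, hf'x, hf'v₀, hb]
      ring
    by_cases hbz : b = 0
    · exfalso
      apply hxW
      have hxv₀ : x ∉ Submodule.span Fq {v₀} := fun hmem => hxW (hspanle hmem)
      have hind := pair_indep hv₀ne hxv₀
      have hrank' := pair_span_finrank hind
      have hWeq := hWuniq (Submodule.span Fq {x, v₀}) ⟨hrank', ?_⟩
      · rw [← hWeq]
        exact Submodule.subset_span (Set.mem_insert x {v₀})
      · intro P hP
        have hP' : P.rep ∈ Submodule.span Fq {x, v₀} := hP
        obtain ⟨a, c, hac⟩ := Submodule.mem_span_pair.mp hP'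
        have hfP : f P.rep = 0 := by
          rw [← hac, cf_combo hφ, hfx, hfv₀, hvc.1, hvc.2.1, hvc.2.2.1]
          ring
        have hf'P : f' P.rep = 0 := by
          rw [← hac, hexp, hbz]
          ring
        rw [hQ, hQ']
        exact ⟨hfP, hf'P⟩
    · have := hexp s t
      rw [hst] at this
      have : s * t = 0 := by
        rcases mul_eq_zero.mp this.symm with h | h
        · exact h
        · exact absurd h hbz
      exact mul_eq_zero.mp this
  -- the common line as a set of projective points
  set L : Set (Projectivization Fq (Fin 4 → Fq)) := {P | P.rep ∈ W} with hLdef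
  have hLS : L ⊆ Q ∩ Q' := hWsub
  -- choose w₀ ∈ W outside span v₀
  obtain ⟨w₀, hw₀W, hw₀span⟩ : ∃ w₀, w₀ ∈ W ∧ w₀ ∉ Submodule.span Fq {v₀} := by
    by_contra hc
    push_neg at hc
    have hle : W ≤ Submodule.span Fq {v₀} := fun z hz => hc z hz
    have := Submodule.finrank_mono (R := Fq) hle
    rw [hWrank, finrank_span_singleton hv₀ne] at this
    omega
  have hw₀ne : w₀ ≠ 0 := fun h => hw₀span (h ▸ Submodule.zero_mem _)
  have hw₀coords : ¬(φ w₀ 0 = 0 ∧ φ w₀ 1 = 0 ∧ φ w₀ 2 = 0) := fun h =>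
    hw₀span ((mem_span_vertex (φ := φ) w₀).mpr h)
  have hfw₀ : f w₀ = 0 := hWf w₀ hw₀W
  -- W is the span of w₀ and v₀
  have hWspan : W = Submodule.span Fq {w₀, v₀} := by
    have hle : Submodule.span Fq {w₀, v₀} ≤ W := by
      apply Submodule.span_le.mpr
      intro z hz
      simp only [Set.mem_insert_iff, Set.mem_singleton_iff] at hz
      rcases hz with rfl | rfl
      exacts [hw₀W, hv₀W]
    have hfr := pair_span_finrank (pair_indep hv₀ne hw₀span)
    exact (Submodule.eq_of_le_of_finrank_eq hle (by rw [hfr, hWrank])).symm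
  -- bound |L| ≤ q + 1
  obtain ⟨i₀, hi₀3, hi₀⟩ : ∃ i₀ : Fin 4, i₀ ≠ 3 ∧ φ w₀ i₀ ≠ 0 := by
    by_contra hc
    push_neg at hc
    exact hw₀coords ⟨hc 0 (by decide), hc 1 (by decide), hc 2 (by decide)⟩
  have hv₀i₀ : φ v₀ i₀ = 0 := by
    rw [hv₀def, LinearEquiv.apply_symm_apply, Pi.single_apply, if_neg hi₀3]
  have hv₀3 : φ v₀ 3 = 1 := by
    rw [hv₀def, LinearEquiv.apply_symm_apply, Pi.single_apply, if_pos rfl]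
  have hL : L.ncard ≤ q + 1 := by
    set τ : Projectivization Fq (Fin 4 → Fq) → Option Fq := fun P =>
      if φ P.rep i₀ = 0 then none else some (φ P.rep 3 / φ P.rep i₀) with hτ
    have hcoord : ∀ P : Projectivization Fq (Fin 4 → Fq), P ∈ L →
        ∃ a c : Fq, P.rep = a • w₀ + c • v₀ ∧ φ P.rep i₀ = a * φ w₀ i₀ ∧
          φ P.rep 3 = a * φ w₀ 3 + c := by
      intro P hP
      have hPW : P.rep ∈ Submodule.span Fq {w₀, v₀} := hWspan ▸ hP
      obtain ⟨a, c, hac⟩ := Submodule.mem_span_pair.mp hPW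
      refine ⟨a, c, hac.symm, ?_, ?_⟩ <;>
        rw [← hac, map_add, map_smul, map_smul] <;>
        simp only [Pi.add_apply, Pi.smul_apply, smul_eq_mul]
      · rw [hv₀i₀]; ring
      · rw [hv₀3]; ring
    have hinj : Set.InjOn τ L := by
      intro P hP P' hP' hττ
      obtain ⟨a, c, hac, hci, hc3⟩ := hcoord P hP
      obtain ⟨a', c', hac', hci', hc3'⟩ := hcoord P' hP'
      by_cases haz : a = 0
      · have hτP : τ P = none := by
          rw [hτ]; simp only []; rw [if_pos (by rw [hci, haz, zero_mul])]
        have ha'z : a' = 0 := by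
          by_contra ha'
          have : τ P' = some (φ P'.rep 3 / φ P'.rep i₀) := by
            rw [hτ]; simp only []
            rw [if_neg (by rw [hci']; exact mul_ne_zero ha' hi₀)]
          rw [hττ, this] at hτP
          cases hτP
        rw [haz, zero_smul, zero_add] at hac
        rw [ha'z, zero_smul, zero_add] at hac'
        have hcne : c ≠ 0 := by
          intro h; exact P.rep_nonzero (by rw [hac, h, zero_smul])
        have hc'ne : c' ≠ 0 := by
          intro h; exact P'.rep_nonzero (by rw [hac', h, zero_smul])
        have : (1 : Fq) • P.rep = (c / c') • P'.rep := by
          rw [one_smul, hac, hac', smul_smul]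
          congr 1
          field_simp
        have := mk_eq_proj P.rep_nonzero P'.rep_nonzero one_ne_zero
          (div_ne_zero hcne hc'ne) this
        rwa [Projectivization.mk_rep, Projectivization.mk_rep] at this
      · have hPi₀ne : φ P.rep i₀ ≠ 0 := by rw [hci]; exact mul_ne_zero haz hi₀
        have ha'z : a' ≠ 0 := by
          intro h
          have hτP' : τ P' = none := by
            rw [hτ]; simp only []; rw [if_pos (by rw [hci', h, zero_mul])]
          have hτP : τ P = some (φ P.rep 3 / φ P.rep i₀) := by
            rw [hτ]; simp only []; rw [if_neg hPi₀ne]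
          rw [← hττ, hτP] at hτP'
          cases hτP'
        have hP'i₀ne : φ P'.rep i₀ ≠ 0 := by rw [hci']; exact mul_ne_zero ha'z hi₀
        have hratio : φ P.rep 3 / φ P.rep i₀ = φ P'.rep 3 / φ P'.rep i₀ := by
          have h1 : τ P = some (φ P.rep 3 / φ P.rep i₀) := by
            rw [hτ]; simp only []; rw [if_neg hPi₀ne]
          have h2 : τ P' = some (φ P'.rep 3 / φ P'.rep i₀) := by
            rw [hτ]; simp only []; rw [if_neg hP'i₀ne]
          rw [h1, h2] at hττ
          exact Option.some_inj.mp hττ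
        rw [hci, hc3, hci', hc3'] at hratio
        have hkey : a' * c = a * c' := by
          field_simp at hratio
          -- (a * φ w₀ 3 + c) * (a' * φ w₀ i₀) = (a' * φ w₀ 3 + c') * (a * φ w₀ i₀)
          have h3 := hratio
          have hcancel : φ w₀ i₀ * (a' * c - a * c') = 0 := by ring_nf; linear_combination (φ w₀ i₀) * h3
          rcases mul_eq_zero.mp hcancel with h | h
          · exact absurd h hi₀
          · linear_combination h
        have hsm : a' • P.rep = a • P'.rep := by
          rw [hac, hac', smul_add, smul_add, smul_smul, smul_smul, smul_smul, smul_smul,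
            mul_comm a' a, hkey]
        have := mk_eq_proj P.rep_nonzero P'.rep_nonzero ha'z haz hsm
        rwa [Projectivization.mk_rep, Projectivization.mk_rep] at this
    have hle := Set.ncard_le_ncard_of_injOn τ (fun P _ => Set.mem_univ (τ P)) hinj
    rwa [Set.ncard_univ, Nat.card_eq_fintype_card, Fintype.card_option, hq] at hle
  -- bound |(Q ∩ Q') \ L| ≤ q
  have hD : ((Q ∩ Q') \ L).ncard ≤ q := by
    set ν : Projectivization Fq (Fin 4 → Fq) → Option Fq := fun P => nu φ P.rep with hν
    have hfacts : ∀ P : Projectivization Fq (Fin 4 → Fq), P ∈ (Q ∩ Q') \ L →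
        f P.rep = 0 ∧ f' P.rep = 0 ∧ P.rep ∉ W ∧
          ¬(φ P.rep 0 = 0 ∧ φ P.rep 1 = 0 ∧ φ P.rep 2 = 0) := by
      intro P hP
      have h1 := hQf P hP.1.1
      have h2 := hQ'f P hP.1.2
      have h3 : P.rep ∉ W := hP.2
      refine ⟨h1, h2, h3, fun h => ?_⟩
      exact h3 (hspanle ((mem_span_vertex (φ := φ) P.rep).mpr h))
    have hmapsto : ∀ P ∈ (Q ∩ Q') \ L, ν P ∈ (Set.univ \ {nu φ w₀} : Set (Option Fq)) := by
      intro P hP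
      obtain ⟨h1, h2, h3, h4⟩ := hfacts P hP
      refine ⟨Set.mem_univ _, fun hc => ?_⟩
      rw [Set.mem_singleton_iff] at hc
      obtain ⟨s, t, hs, heq⟩ := prop_of_nu_eq hφ w₀ P.rep hfw₀ h1 hw₀coords h4 hc.symm
      apply h3
      rw [heq]
      exact W.add_mem (W.smul_mem _ hw₀W) (W.smul_mem _ hv₀W)
    have hinj : Set.InjOn ν ((Q ∩ Q') \ L) := by
      intro P hP P' hP' hνν
      obtain ⟨h1, h2, h3, h4⟩ := hfacts P hP
      obtain ⟨h1', h2', h3', h4'⟩ := hfacts P' hP'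
      obtain ⟨s, t, hs, heq⟩ := prop_of_nu_eq hφ P.rep P'.rep h1 h1' h4 h4' hνν
      have hst := hB P.rep h1 h2 h3 s t (by rw [← heq]; exact h2')
      have ht : t = 0 := hst.resolve_left hs
      rw [ht, zero_smul, add_zero] at heq
      have : (1 : Fq) • P'.rep = s • P.rep := by rw [one_smul, heq]
      have := mk_eq_proj P'.rep_nonzero P.rep_nonzero one_ne_zero hs this
      rw [Projectivization.mk_rep, Projectivization.mk_rep] at this
      exact this.symm
    have hle := Set.ncard_le_ncard_of_injOn ν hmapsto hinj
    have hcard : (Set.univ \ {nu φ w₀} : Set (Option Fq)).ncard = q := by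
      rw [Set.ncard_diff_singleton_of_mem (Set.mem_univ _), Set.ncard_univ,
        Nat.card_eq_fintype_card, Fintype.card_option, hq]
      omega
    rwa [hcard] at hle
  -- combine
  have hcover : Q ∩ Q' = L ∪ ((Q ∩ Q') \ L) := (Set.union_diff_cancel hLS).symm
  calc (Q ∩ Q').ncard = (L ∪ ((Q ∩ Q') \ L)).ncard := by rw [← hcover]
    _ ≤ L.ncard + ((Q ∩ Q') \ L).ncard := Set.ncard_union_le _ _
    _ ≤ (q + 1) + q := add_le_add hL hD
    _ = 2 * q + 1 := by ring
end

section
/- Let q ≥ 3 be a prime power. The functional code C_2(X) on the elliptic quadric X in PG(3,q) is a linear code of length q^2+1 and dimension 9, i.e., the evaluation map from the space of quadratic forms in 4 variables over F_q to F_q^{q^2+1} (evaluating at normalized representatives of the points of X) has kernel of dimension 1 (spanned by the form defining X); equivalently, if a quadratic form f vanishes at every point of X, then f is a scalar multiple of the form defining X. -/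
open Polynomial in
private lemma auxdeg3 {K : Type*} [Field K] [Fintype K] (h : 4 ≤ Fintype.card K)
    (u0 u1 u2 u3 : K) (hz : ∀ s : K, u0 + u1*s + u2*s^2 + u3*s^3 = 0) :
    u0 = 0 ∧ u1 = 0 ∧ u2 = 0 ∧ u3 = 0 := by
  have hp : (C u3 * X^3 + C u2 * X^2 + C u1 * X + C u0 : K[X]) = 0 := by
    apply Polynomial.eq_zero_of_natDegree_lt_card_of_eval_eq_zero _ (f := (id : K → K))
      Function.injective_id
    · intro s; simp only [eval_add, eval_mul, eval_pow, eval_C, eval_X, id]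
      linear_combination hz s
    · exact lt_of_le_of_lt Polynomial.natDegree_cubic_le (by omega)
  refine ⟨?_, ?_, ?_, ?_⟩
  · simpa using congrArg (fun p => Polynomial.coeff p 0) hp
  · simpa using congrArg (fun p => Polynomial.coeff p 1) hp
  · simpa using congrArg (fun p => Polynomial.coeff p 2) hp
  · simpa using congrArg (fun p => Polynomial.coeff p 3) hp

open Polynomial in
private lemma auxdeg2 {K : Type*} [Field K] [Fintype K] (h : 3 ≤ Fintype.card K)
    (u0 u1 u2 : K) (hz : ∀ s : K, u0 + u1*s + u2*s^2 = 0) :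
    u0 = 0 ∧ u1 = 0 ∧ u2 = 0 := by
  have hp : (C u2 * X^2 + C u1 * X + C u0 : K[X]) = 0 := by
    apply Polynomial.eq_zero_of_natDegree_lt_card_of_eval_eq_zero _ (f := (id : K → K))
      Function.injective_id
    · intro s; simp only [eval_add, eval_mul, eval_pow, eval_C, eval_X, id]
      linear_combination hz s
    · exact lt_of_le_of_lt Polynomial.natDegree_quadratic_le (by omega)
  refine ⟨?_, ?_, ?_⟩
  · simpa using congrArg (fun p => Polynomial.coeff p 0) hp
  · simpa using congrArg (fun p => Polynomial.coeff p 1) hp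
  · simpa using congrArg (fun p => Polynomial.coeff p 2) hp

private lemma auxdeg1 {K : Type*} [Field K]
    (u0 u1 : K) (hz : ∀ s : K, u0 + u1*s = 0) : u0 = 0 ∧ u1 = 0 := by
  constructor
  · linear_combination hz 0
  · linear_combination hz 1 - hz 0

open Polynomial in
private lemma noroot {K : Type*} [Field K] {a b : K}
    (hirr : Irreducible (X ^ 2 + C a * X + C b : K[X])) :
    ∀ r : K, r^2 + a*r + b ≠ 0 := by
  intro r hr
  have hroot : (X ^ 2 + C a * X + C b : K[X]).IsRoot r := by
    simp only [IsRoot, eval_add, eval_mul, eval_pow, eval_C, eval_X]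
    linear_combination hr
  obtain ⟨c, hc⟩ := (Polynomial.dvd_iff_isRoot).2 hroot
  rcases hirr.isUnit_or_isUnit hc with h | h
  · exact Polynomial.not_isUnit_X_sub_C r h
  · have hdeg : (X ^ 2 + C a * X + C b : K[X]).natDegree = 2 := by
      simpa using Polynomial.natDegree_quadratic (a := (1:K)) (b := a) (c := b) one_ne_zero
    have hc0 : c ≠ 0 := by
      rintro rfl
      rw [mul_zero] at hc
      exact hirr.ne_zero hc
    have hmul := Polynomial.natDegree_mul (Polynomial.X_sub_C_ne_zero r) hc0
    rw [← hc, hdeg, Polynomial.natDegree_X_sub_C] at hmul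
    exact Polynomial.not_isUnit_of_natDegree_pos c (by omega) h

private lemma aniso {K : Type*} [Field K] {a b : K}
    (h : ∀ r : K, r^2 + a*r + b ≠ 0) :
    ∀ x y : K, x^2 + a*(x*y) + b*y^2 = 0 → x = 0 ∧ y = 0 := by
  intro x y hxy
  by_cases hy : y = 0
  · subst hy
    refine ⟨?_, rfl⟩
    have : x^2 = 0 := by linear_combination hxy
    exact pow_eq_zero_iff (n := 2) (by norm_num) |>.mp this
  · exfalso
    apply h (x/y)
    have hne : (y:K)^2 ≠ 0 := pow_ne_zero _ hy
    have key : ((x/y)^2 + a*(x/y) + b) * y^2 = x^2 + a*(x*y) + b*y^2 := by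
      field_simp
    have : ((x/y)^2 + a*(x/y) + b) * y^2 = 0 := by rw [key, hxy]
    rcases mul_eq_zero.mp this with h' | h'
    · exact h'
    · exact absurd h' hne

private noncomputable def mm (i j : Fin 4) : Fin 4 →₀ ℕ := Finsupp.single i 1 + Finsupp.single j 1

private lemma mval (i j k : Fin 4) :
    (mm i j) k = (if i = k then 1 else 0) + (if j = k then 1 else 0) := by
  simp [mm, Finsupp.single_apply]

open MvPolynomial in
private lemma mm_X {K : Type*} [CommRing K] (i j : Fin 4) (r : K) :
    (monomial (mm i j) r : MvPolynomial (Fin 4) K) = C r * (X i * X j) := by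
  rw [mm, X, X, monomial_mul, C_mul_monomial]
  simp

attribute [irreducible] mm

private lemma hdeg4 (d : Fin 4 →₀ ℕ) : d.degree = d 0 + d 1 + d 2 + d 3 := by
  rw [Finsupp.degree_eq_sum]
  exact Fin.sum_univ_four d

private lemma mmE00 (d : Fin 4 →₀ ℕ) :
    d = mm 0 0 ↔ (d 0 = 2 ∧ d 1 = 0 ∧ d 2 = 0 ∧ d 3 = 0) := by
  rw [Finsupp.ext_iff]
  constructor
  · intro h
    refine ⟨?_, ?_, ?_, ?_⟩ <;> · rw [h, mval]; decide
  · intro ⟨h0, h1, h2, h3⟩ k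
    fin_cases k <;> rw [mval] <;> simp_all

private lemma mmE01 (d : Fin 4 →₀ ℕ) :
    d = mm 0 1 ↔ (d 0 = 1 ∧ d 1 = 1 ∧ d 2 = 0 ∧ d 3 = 0) := by
  rw [Finsupp.ext_iff]
  constructor
  · intro h
    refine ⟨?_, ?_, ?_, ?_⟩ <;> · rw [h, mval]; decide
  · intro ⟨h0, h1, h2, h3⟩ k
    fin_cases k <;> rw [mval] <;> simp_all

private lemma mmE02 (d : Fin 4 →₀ ℕ) :
    d = mm 0 2 ↔ (d 0 = 1 ∧ d 1 = 0 ∧ d 2 = 1 ∧ d 3 = 0) := by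
  rw [Finsupp.ext_iff]
  constructor
  · intro h
    refine ⟨?_, ?_, ?_, ?_⟩ <;> · rw [h, mval]; decide
  · intro ⟨h0, h1, h2, h3⟩ k
    fin_cases k <;> rw [mval] <;> simp_all

private lemma mmE03 (d : Fin 4 →₀ ℕ) :
    d = mm 0 3 ↔ (d 0 = 1 ∧ d 1 = 0 ∧ d 2 = 0 ∧ d 3 = 1) := by
  rw [Finsupp.ext_iff]
  constructor
  · intro h
    refine ⟨?_, ?_, ?_, ?_⟩ <;> · rw [h, mval]; decide
  · intro ⟨h0, h1, h2, h3⟩ k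
    fin_cases k <;> rw [mval] <;> simp_all

private lemma mmE11 (d : Fin 4 →₀ ℕ) :
    d = mm 1 1 ↔ (d 0 = 0 ∧ d 1 = 2 ∧ d 2 = 0 ∧ d 3 = 0) := by
  rw [Finsupp.ext_iff]
  constructor
  · intro h
    refine ⟨?_, ?_, ?_, ?_⟩ <;> · rw [h, mval]; decide
  · intro ⟨h0, h1, h2, h3⟩ k
    fin_cases k <;> rw [mval] <;> simp_all

private lemma mmE12 (d : Fin 4 →₀ ℕ) :
    d = mm 1 2 ↔ (d 0 = 0 ∧ d 1 = 1 ∧ d 2 = 1 ∧ d 3 = 0) := by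
  rw [Finsupp.ext_iff]
  constructor
  · intro h
    refine ⟨?_, ?_, ?_, ?_⟩ <;> · rw [h, mval]; decide
  · intro ⟨h0, h1, h2, h3⟩ k
    fin_cases k <;> rw [mval] <;> simp_all

private lemma mmE13 (d : Fin 4 →₀ ℕ) :
    d = mm 1 3 ↔ (d 0 = 0 ∧ d 1 = 1 ∧ d 2 = 0 ∧ d 3 = 1) := by
  rw [Finsupp.ext_iff]
  constructor
  · intro h
    refine ⟨?_, ?_, ?_, ?_⟩ <;> · rw [h, mval]; decide
  · intro ⟨h0, h1, h2, h3⟩ k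
    fin_cases k <;> rw [mval] <;> simp_all

private lemma mmE22 (d : Fin 4 →₀ ℕ) :
    d = mm 2 2 ↔ (d 0 = 0 ∧ d 1 = 0 ∧ d 2 = 2 ∧ d 3 = 0) := by
  rw [Finsupp.ext_iff]
  constructor
  · intro h
    refine ⟨?_, ?_, ?_, ?_⟩ <;> · rw [h, mval]; decide
  · intro ⟨h0, h1, h2, h3⟩ k
    fin_cases k <;> rw [mval] <;> simp_all

private lemma mmE23 (d : Fin 4 →₀ ℕ) :
    d = mm 2 3 ↔ (d 0 = 0 ∧ d 1 = 0 ∧ d 2 = 1 ∧ d 3 = 1) := by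
  rw [Finsupp.ext_iff]
  constructor
  · intro h
    refine ⟨?_, ?_, ?_, ?_⟩ <;> · rw [h, mval]; decide
  · intro ⟨h0, h1, h2, h3⟩ k
    fin_cases k <;> rw [mval] <;> simp_all

private lemma mmE33 (d : Fin 4 →₀ ℕ) :
    d = mm 3 3 ↔ (d 0 = 0 ∧ d 1 = 0 ∧ d 2 = 0 ∧ d 3 = 2) := by
  rw [Finsupp.ext_iff]
  constructor
  · intro h
    refine ⟨?_, ?_, ?_, ?_⟩ <;> · rw [h, mval]; decide
  · intro ⟨h0, h1, h2, h3⟩ k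
    fin_cases k <;> rw [mval] <;> simp_all

private lemma mm_deg (i j : Fin 4) : (mm i j).degree = 2 := by
  rw [hdeg4]
  fin_cases i <;> fin_cases j <;> (rw [mval, mval, mval, mval]; decide)

private lemma enum (d : Fin 4 →₀ ℕ) (h : d.degree = 2) :
    d = mm 0 0 ∨ d = mm 0 1 ∨ d = mm 0 2 ∨ d = mm 0 3 ∨ d = mm 1 1 ∨
    d = mm 1 2 ∨ d = mm 1 3 ∨ d = mm 2 2 ∨ d = mm 2 3 ∨ d = mm 3 3 := by
  rw [hdeg4] at h
  simp only [mmE00, mmE01, mmE02, mmE03, mmE11, mmE12, mmE13, mmE22, mmE23, mmE33]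
  have h0 : d 0 = 0 ∨ d 0 = 1 ∨ d 0 = 2 := by omega
  have h1 : d 1 = 0 ∨ d 1 = 1 ∨ d 1 = 2 := by omega
  have h2 : d 2 = 0 ∨ d 2 = 1 ∨ d 2 = 2 := by omega
  have h3 : d 3 = 0 ∨ d 3 = 1 ∨ d 3 = 2 := by omega
  rcases h0 with h0|h0|h0 <;> rcases h1 with h1|h1|h1 <;> rcases h2 with h2|h2|h2 <;>
    rcases h3 with h3|h3|h3 <;> simp_all

open MvPolynomial in
private lemma quad_expand {K : Type*} [CommRing K] (f : MvPolynomial (Fin 4) K)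
    (hf : f.IsHomogeneous 2) :
    f = monomial (mm 0 0) (coeff (mm 0 0) f) +
      monomial (mm 0 1) (coeff (mm 0 1) f) +
      monomial (mm 0 2) (coeff (mm 0 2) f) +
      monomial (mm 0 3) (coeff (mm 0 3) f) +
      monomial (mm 1 1) (coeff (mm 1 1) f) +
      monomial (mm 1 2) (coeff (mm 1 2) f) +
      monomial (mm 1 3) (coeff (mm 1 3) f) +
      monomial (mm 2 2) (coeff (mm 2 2) f) +
      monomial (mm 2 3) (coeff (mm 2 3) f) +
      monomial (mm 3 3) (coeff (mm 3 3) f) := by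
  apply MvPolynomial.ext
  intro d
  by_cases hd : d.degree = 2
  · rcases enum d hd with rfl | rfl | rfl | rfl | rfl | rfl | rfl | rfl | rfl | rfl <;>
      · simp only [coeff_add, coeff_monomial, mmE00, mmE01, mmE02, mmE03, mmE11, mmE12, mmE13, mmE22, mmE23, mmE33, mval]
        norm_num
  · rw [hf.coeff_eq_zero hd]
    simp only [coeff_add, coeff_monomial]
    have hne : ∀ i j : Fin 4, ¬ (mm i j = d) := fun i j hc => hd (hc ▸ mm_deg i j)
    simp [hne]


private lemma smul_vec4 {K : Type*} [Field K] (c : K) (w0 w1 w2 w3 : K) :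
    c • (![w0,w1,w2,w3] : Fin 4 → K) = ![c*w0, c*w1, c*w2, c*w3] := by
  funext i
  fin_cases i <;> rfl

private lemma vec4_ext {K : Type*} (v : Fin 4 → K) (a0 a1 a2 a3 : K)
    (h0 : a0 = v 0) (h1 : a1 = v 1) (h2 : a2 = v 2) (h3 : a3 = v 3) :
    ![a0,a1,a2,a3] = v := by
  funext i
  fin_cases i
  exacts [h0, h1, h2, h3]

/-- The functional code `C₂(X)` on the elliptic quadric `X = Z(x0*x1 + g(x2,x3))` in
PG(3,q) (with `g(x2,x3) = x2² + a·x2·x3 + b·x3²` irreducible) has length `q² + 1` and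
dimension 9: the evaluation map on the 10-dimensional space of quadratic forms has
kernel spanned by the form defining `X`, i.e. any quadratic form vanishing on all
points of `X` is a scalar multiple of the defining form. -/
theorem elliptic_functional_code_params (q : ℕ) (Fq : Type) [Field Fq] [Fintype Fq]
    (hq : Fintype.card Fq = q) (hq3 : 3 ≤ q) (a b : Fq)
    (hirr : Irreducible
      (Polynomial.X ^ 2 + Polynomial.C a * Polynomial.X + Polynomial.C b : Polynomial Fq))
    (f₀ : MvPolynomial (Fin 4) Fq)
    (hf₀ : f₀ = MvPolynomial.X 0 * MvPolynomial.X 1 + MvPolynomial.X 2 ^ 2 +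
      MvPolynomial.C a * (MvPolynomial.X 2 * MvPolynomial.X 3) +
      MvPolynomial.C b * MvPolynomial.X 3 ^ 2)
    (X : Set (Projectivization Fq (Fin 4 → Fq)))
    (hX : X = {P | MvPolynomial.eval P.rep f₀ = 0}) :
    X.ncard = q ^ 2 + 1 ∧
    ∀ f : MvPolynomial (Fin 4) Fq, f.IsHomogeneous 2 →
      (∀ P ∈ X, MvPolynomial.eval P.rep f = 0) → ∃ c : Fq, f = c • f₀ := by
  classical
  have hroot := noroot hirr
  have haniso := aniso hroot
  -- membership characterization
  have hmem : ∀ (v : Fin 4 → Fq) (hv : v ≠ 0),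
      (Projectivization.mk Fq v hv ∈ X ↔
        v 0 * v 1 + (v 2)^2 + a*(v 2 * v 3) + b*(v 3)^2 = 0) := by
    intro v hv
    rw [hX]
    obtain ⟨u, hu⟩ := Projectivization.exists_smul_eq_mk_rep Fq v hv
    have hrep : MvPolynomial.eval (Projectivization.mk Fq v hv).rep f₀
        = (u:Fq)^2 * (v 0 * v 1 + (v 2)^2 + a*(v 2 * v 3) + b*(v 3)^2) := by
      rw [← hu, hf₀]
      simp only [MvPolynomial.eval_add, MvPolynomial.eval_mul, MvPolynomial.eval_pow,
        MvPolynomial.eval_X, MvPolynomial.eval_C, Units.smul_def, Pi.smul_apply, smul_eq_mul]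
      ring
    simp only [Set.mem_setOf_eq, hrep]
    constructor
    · intro h
      rcases mul_eq_zero.mp h with h' | h'
      · exact absurd h' (pow_ne_zero _ (Units.ne_zero u))
      · exact h'
    · intro h; rw [h, mul_zero]
  have h10 : (![1,0,0,0] : Fin 4 → Fq) ≠ 0 := by
    intro h
    simpa using congrFun h 0
  have hw : ∀ s t : Fq, (![-(s^2 + a*(s*t) + b*t^2), 1, s, t] : Fin 4 → Fq) ≠ 0 := by
    intro s t h
    simpa using congrFun h 1
  set e : Projectivization Fq (Fin 4 → Fq) := Projectivization.mk Fq ![1,0,0,0] h10 with he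
  set φ : Fq × Fq → Projectivization Fq (Fin 4 → Fq) :=
    fun p => Projectivization.mk Fq ![-(p.1^2 + a*(p.1*p.2) + b*p.2^2), 1, p.1, p.2]
      (hw p.1 p.2) with hφ
  have hXeq : X = insert e (Set.range φ) := by
    apply Set.Subset.antisymm
    · intro P hP
      have hP' : Projectivization.mk Fq P.rep P.rep_nonzero ∈ X := by
        rw [Projectivization.mk_rep]; exact hP
      have hv := (hmem P.rep P.rep_nonzero).1 hP'
      by_cases h1 : P.rep 1 = 0
      · left
        have h23 : (P.rep 2)^2 + a*(P.rep 2 * P.rep 3) + b*(P.rep 3)^2 = 0 := by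
          linear_combination hv - P.rep 0 * h1
        obtain ⟨h2, h3⟩ := haniso _ _ h23
        have h0 : P.rep 0 ≠ 0 := by
          intro h0
          apply P.rep_nonzero
          funext i
          fin_cases i <;> simp [h0, h1, h2, h3]
        rw [← Projectivization.mk_rep P, he]
        apply (Projectivization.mk_eq_mk_iff Fq _ _ _ _).2
        refine ⟨Units.mk0 (P.rep 0) h0, ?_⟩
        funext i
        fin_cases i <;> simp [Units.smul_def, h1, h2, h3]
      · right
        refine ⟨(P.rep 2 / P.rep 1, P.rep 3 / P.rep 1), Eq.symm ?_⟩
        rw [hφ]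
        conv_lhs => rw [← Projectivization.mk_rep P]
        apply (Projectivization.mk_eq_mk_iff Fq _ _ _ _).2
        refine ⟨Units.mk0 (P.rep 1) h1, ?_⟩
        rw [Units.smul_def, Units.val_mk0, smul_vec4]
        apply vec4_ext
        · field_simp
          linear_combination -hv
        · rw [mul_one]
        · field_simp
        · field_simp
    · intro P hP
      rcases Set.mem_insert_iff.1 hP with rfl | ⟨p, rfl⟩
      · rw [he]
        rw [hmem ![1,0,0,0] h10]
        simp
      · rw [hφ]
        rw [hmem _ (hw p.1 p.2)]
        simp only [Matrix.cons_val_zero, Matrix.cons_val_one, Matrix.head_cons,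
          Matrix.cons_val_two, Matrix.tail_cons, Matrix.cons_val_three]
        ring
  have hnot : e ∉ Set.range φ := by
    rintro ⟨p, hp⟩
    rw [hφ, he] at hp
    obtain ⟨u, hu⟩ := (Projectivization.mk_eq_mk_iff Fq _ _ _ _).1 hp
    have h1 := congrFun hu 1
    simp [Units.smul_def] at h1
  have hinj : Function.Injective φ := by
    intro p p' hpp
    rw [hφ] at hpp
    obtain ⟨u, hu⟩ := (Projectivization.mk_eq_mk_iff Fq _ _ _ _).1 hpp
    have h1 := congrFun hu 1
    simp only [Units.smul_def, Pi.smul_apply, smul_eq_mul, Matrix.cons_val_one,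
      Matrix.head_cons, Matrix.cons_val_zero, mul_one] at h1
    have h2 := congrFun hu 2
    have h3 := congrFun hu 3
    simp only [Units.smul_def, Pi.smul_apply, smul_eq_mul, Matrix.cons_val_two,
      Matrix.tail_cons, Matrix.head_cons, Matrix.cons_val_three, h1, one_mul] at h2 h3
    exact Prod.ext h2.symm h3.symm
  constructor
  · rw [hXeq, Set.ncard_insert_of_notMem hnot (Set.finite_range φ),
      ← Set.image_univ, Set.ncard_image_of_injective _ hinj, Set.ncard_univ,
      Nat.card_eq_fintype_card, Fintype.card_prod, hq]
    ring
  · intro f hf hvanish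
    obtain ⟨c00,c01,c02,c03,c11,c12,c13,c22,c23,c33, hfe⟩ :
        ∃ c00 c01 c02 c03 c11 c12 c13 c22 c23 c33 : Fq,
          f = MvPolynomial.C c00 * (MvPolynomial.X 0 * MvPolynomial.X 0) +
            MvPolynomial.C c01 * (MvPolynomial.X 0 * MvPolynomial.X 1) +
            MvPolynomial.C c02 * (MvPolynomial.X 0 * MvPolynomial.X 2) +
            MvPolynomial.C c03 * (MvPolynomial.X 0 * MvPolynomial.X 3) +
            MvPolynomial.C c11 * (MvPolynomial.X 1 * MvPolynomial.X 1) +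
            MvPolynomial.C c12 * (MvPolynomial.X 1 * MvPolynomial.X 2) +
            MvPolynomial.C c13 * (MvPolynomial.X 1 * MvPolynomial.X 3) +
            MvPolynomial.C c22 * (MvPolynomial.X 2 * MvPolynomial.X 2) +
            MvPolynomial.C c23 * (MvPolynomial.X 2 * MvPolynomial.X 3) +
            MvPolynomial.C c33 * (MvPolynomial.X 3 * MvPolynomial.X 3) :=
      ⟨_,_,_,_,_,_,_,_,_,_, by rw [quad_expand f hf]; simp only [mm_X]; rfl⟩
    have heval : ∀ x : Fin 4 → Fq, MvPolynomial.eval x f =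
        c00*(x 0 * x 0) + c01*(x 0 * x 1) + c02*(x 0 * x 2) + c03*(x 0 * x 3) +
        c11*(x 1 * x 1) + c12*(x 1 * x 2) + c13*(x 1 * x 3) + c22*(x 2 * x 2) +
        c23*(x 2 * x 3) + c33*(x 3 * x 3) := by
      intro x
      rw [hfe]
      simp only [MvPolynomial.eval_add, MvPolynomial.eval_mul, MvPolynomial.eval_X,
        MvPolynomial.eval_C]
    have hvan' : ∀ (v : Fin 4 → Fq) (hv : v ≠ 0), Projectivization.mk Fq v hv ∈ X →
        c00*(v 0 * v 0) + c01*(v 0 * v 1) + c02*(v 0 * v 2) + c03*(v 0 * v 3) +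
        c11*(v 1 * v 1) + c12*(v 1 * v 2) + c13*(v 1 * v 3) + c22*(v 2 * v 2) +
        c23*(v 2 * v 3) + c33*(v 3 * v 3) = 0 := by
      intro v hv hvX
      obtain ⟨u, hu⟩ := Projectivization.exists_smul_eq_mk_rep Fq v hv
      have h := hvanish _ hvX
      rw [← hu, heval] at h
      simp only [Units.smul_def, Pi.smul_apply, smul_eq_mul] at h
      have h2 : (u:Fq)^2 * (c00*(v 0 * v 0) + c01*(v 0 * v 1) + c02*(v 0 * v 2) +
          c03*(v 0 * v 3) + c11*(v 1 * v 1) + c12*(v 1 * v 2) + c13*(v 1 * v 3) +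
          c22*(v 2 * v 2) + c23*(v 2 * v 3) + c33*(v 3 * v 3)) = 0 := by
        linear_combination h
      rcases mul_eq_zero.mp h2 with h' | h'
      · exact absurd h' (pow_ne_zero _ (Units.ne_zero u))
      · exact h'
    have heX : e ∈ X := by rw [hXeq]; exact Set.mem_insert _ _
    have hc00 : c00 = 0 := by
      have h := hvan' ![1,0,0,0] h10 (by rw [he] at heX; exact heX)
      simp at h
      linear_combination h
    subst hc00
    have hst : ∀ s t : Fq,
        c01*(-(s^2 + a*(s*t) + b*t^2)) + c02*(-(s^2 + a*(s*t) + b*t^2)*s) +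
        c03*(-(s^2 + a*(s*t) + b*t^2)*t) + c11 + c12*s + c13*t + c22*(s*s) +
        c23*(s*t) + c33*(t*t) = 0 := by
      intro s t
      have hmemst : φ (s, t) ∈ X := by
        rw [hXeq]; exact Set.mem_insert_iff.2 (Or.inr ⟨(s,t), rfl⟩)
      rw [hφ] at hmemst
      have h := hvan' _ (hw s t) hmemst
      simp only [Matrix.cons_val_zero, Matrix.cons_val_one, Matrix.head_cons,
        Matrix.cons_val_two, Matrix.tail_cons, Matrix.cons_val_three] at h
      linear_combination h
    have hcards : 4 ≤ Fintype.card Fq ∨ Fintype.card Fq = 3 := by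
      rw [hq]; omega
    have hconc : c02 = 0 ∧ c03 = 0 ∧ c11 = 0 ∧ c12 = 0 ∧ c13 = 0 ∧
        c22 = c01 ∧ c23 = a*c01 ∧ c33 = b*c01 := by
      rcases hcards with h4 | h3
      · have key := fun t : Fq => auxdeg3 h4
          (c11 + c13*t + (c33 - b*c01)*t^2 + (-(b*c03))*t^3)
          (c12 + (c23 - a*c01)*t + (-(b*c02) - a*c03)*t^2)
          ((c22 - c01) + (-(a*c02) - c03)*t)
          (-c02)
          (fun s => by linear_combination hst s t)
        have hc02 : c02 = 0 := by linear_combination -(key 0).2.2.2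
        have L2 := auxdeg1 (c22 - c01) (-(a*c02) - c03)
          (fun t => by linear_combination (key t).2.2.1)
        have L1 := auxdeg2 (by omega) c12 (c23 - a*c01) (-(b*c02) - a*c03)
          (fun t => by linear_combination (key t).2.1)
        have L0 := auxdeg3 h4 c11 c13 (c33 - b*c01) (-(b*c03))
          (fun t => by linear_combination (key t).1)
        refine ⟨hc02, ?_, L0.1, L1.1, L0.2.1, ?_, ?_, ?_⟩
        · linear_combination -L2.2 - a*hc02
        · linear_combination L2.1
        · linear_combination L1.2.1
        · linear_combination L0.2.2.1
      · have hcube : ∀ s : Fq, s^3 = s := by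
          intro s
          have := FiniteField.pow_card s
          rwa [h3] at this
        have key := fun t : Fq => auxdeg2 (le_of_eq h3.symm)
          (c11 + (c13 - b*c03)*t + (c33 - b*c01)*t^2)
          ((c12 - c02) + (c23 - a*c01)*t + (-(b*c02) - a*c03)*t^2)
          ((c22 - c01) + (-(a*c02) - c03)*t)
          (fun s => by linear_combination hst s t + c02 * hcube s + b*c03 * hcube t)
        have M0 := auxdeg2 (le_of_eq h3.symm) c11 (c13 - b*c03) (c33 - b*c01)
          (fun t => by linear_combination (key t).1)
        have M1 := auxdeg2 (le_of_eq h3.symm) (c12 - c02) (c23 - a*c01)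
          (-(b*c02) - a*c03) (fun t => by linear_combination (key t).2.1)
        have M2 := auxdeg1 (c22 - c01) (-(a*c02) - c03)
          (fun t => by linear_combination (key t).2.2)
        have h3z : (3:Fq) = 0 := by
          have := FiniteField.cast_card_eq_zero Fq
          rw [h3] at this
          exact_mod_cast this
        have hba : b - a^2 ≠ 0 := by
          intro hba
          apply hroot a
          linear_combination hba + a^2 * h3z
        have hc02 : c02 = 0 := by
          have hz : (b - a^2) * c02 = 0 := by linear_combination -M1.2.2 + a * M2.2
          rcases mul_eq_zero.mp hz with h' | h'
          · exact absurd h' hba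
          · exact h'
        have hc03 : c03 = 0 := by linear_combination -M2.2 - a*hc02
        refine ⟨hc02, hc03, M0.1, ?_, ?_, ?_, ?_, ?_⟩
        · linear_combination M1.1 + hc02
        · linear_combination M0.2.1 + b*hc03
        · linear_combination M2.1
        · linear_combination M1.2.1
        · linear_combination M0.2.2
    obtain ⟨hc02, hc03, hc11, hc12, hc13, hc22, hc23, hc33⟩ := hconc
    refine ⟨c01, ?_⟩
    rw [hfe, hc02, hc03, hc11, hc12, hc13, hc22, hc23, hc33, hf₀,
      MvPolynomial.smul_eq_C_mul]
    simp only [map_mul, map_zero]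
    ring
end
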